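/- arXiv:2312.01370 — 8 statements merged into one kernel-verified Lean document; each statement's English description precedes it below -/
import Mathlib

section
/- Let A ∈ ℂ^{m×n} and W ∈ ℂ^{n×m} with rank(WAW) = rank(A). Then X ∈ ℂ^{m×n} is a {1',2',3'}-inverse of A if and only if X is a {1,2,3}-inverse of WAW, i.e., (WAW)X(WAW) = WAW, X(WAW)X = X, and ((WAW)X)* = (WAW)X. -/
/-!
If `rank (W A W) = rank A`, then `A W` and `W A` have the same column, resp. row, space as `A`,
so `A = A W U = V W A` for some `U`, `V`. Hence `A W X W A = V (W A W) X (W A W) U`, and the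
condition `(W A W) X (W A W) = W A W` turns this into `V (W A W) U = A`. Conversely
`A W X W A = A` gives `(W A W) X (W A W) = W A W` by multiplying with `W` on both sides. The
other two Penrose conditions coincide for `A` and `W A W` up to reassociation.
-/

open Matrix

namespace Matrix

variable {K : Type*} [Field K] {l m n : Type*}

theorem exists_mul_eq_of_range_mulVecLin_le [Fintype m] [Fintype n]
    {M : Matrix l m K} {N : Matrix l n K}
    (h : LinearMap.range N.mulVecLin ≤ LinearMap.range M.mulVecLin) :
    ∃ U : Matrix m n K, M * U = N := by
  classical
  choose u hu using fun j => h ⟨Pi.single j 1, rfl⟩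
  refine ⟨(of u)ᵀ, ext fun i j => ?_⟩
  simpa [mul_apply, mulVec, dotProduct, Pi.single_apply] using congrFun (hu j) i

theorem range_mulVecLin_mul_eq_of_rank_le [Fintype m] [Fintype n]
    {M : Matrix l m K} {N : Matrix m n K} (h : M.rank ≤ (M * N).rank) :
    LinearMap.range (M * N).mulVecLin = LinearMap.range M.mulVecLin := by
  refine Submodule.eq_of_le_of_finrank_le ?_ h
  rw [mulVecLin_mul]
  exact LinearMap.range_comp_le_range _ _

theorem exists_mul_mul_eq_of_rank_le [Fintype m] [Fintype n]
    {M : Matrix l m K} {N : Matrix m n K} (h : M.rank ≤ (M * N).rank) :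
    ∃ U : Matrix n m K, M * N * U = M :=
  exists_mul_eq_of_range_mulVecLin_le (range_mulVecLin_mul_eq_of_rank_le h).ge

theorem exists_mul_mul_eq_of_rank_le' [Fintype l] [Fintype m] [Fintype n]
    {M : Matrix m n K} {N : Matrix l m K} (h : M.rank ≤ (N * M).rank) :
    ∃ V : Matrix m l K, V * (N * M) = M := by
  obtain ⟨U, hU⟩ := exists_mul_mul_eq_of_rank_le (M := Mᵀ) (N := Nᵀ)
    (by rwa [← transpose_mul, rank_transpose, rank_transpose])
  exact ⟨Uᵀ, by simpa [transpose_mul] using congrArg transpose hU⟩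

theorem mul_mul_mul_mul_eq_self_of_rank_mul_mul_eq [Fintype m] [Fintype n]
    {A : Matrix m n K} {W : Matrix n m K} (X : Matrix m n K)
    (hrank : (W * A * W).rank = A.rank) (h : W * A * W * X * (W * A * W) = W * A * W) :
    A * W * X * W * A = A := by
  obtain ⟨U, hU⟩ : ∃ U, A * W * U = A := exists_mul_mul_eq_of_rank_le <| by
    rw [← hrank, Matrix.mul_assoc]
    exact rank_mul_le_right W (A * W)
  obtain ⟨V, hV⟩ : ∃ V, V * (W * A) = A := exists_mul_mul_eq_of_rank_le' <|
    hrank ▸ rank_mul_le_left (W * A) W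
  calc A * W * X * W * A = V * (W * A) * W * X * W * (A * W * U) := by rw [hU, hV]
    _ = V * (W * A * W * X * (W * A * W)) * U := by simp only [Matrix.mul_assoc]
    _ = V * (W * A) * (W * U) := by rw [h]; simp only [Matrix.mul_assoc]
    _ = A := by rw [hV, ← Matrix.mul_assoc, hU]

end Matrix

/-- under `rank (W * A * W) = rank A`, `X` is a `{1',2',3'}`-inverse of `A`
iff `X` is a `{1,2,3}`-inverse of `W * A * W`. -/
theorem stmt1 (m n : ℕ) (A : Matrix (Fin m) (Fin n) ℂ) (W : Matrix (Fin n) (Fin m) ℂ)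
    (hrank : (W * A * W).rank = A.rank) (X : Matrix (Fin m) (Fin n) ℂ) :
    (A * W * X * W * A = A ∧
      X * W * A * W * X = X ∧
      (W * A * W * X)ᴴ = W * A * W * X) ↔
    ((W * A * W) * X * (W * A * W) = W * A * W ∧
      X * (W * A * W) * X = X ∧
      ((W * A * W) * X)ᴴ = (W * A * W) * X) := by
  have h₁ : A * W * X * W * A = A ↔ W * A * W * X * (W * A * W) = W * A * W := by
    refine ⟨fun h => ?_, mul_mul_mul_mul_eq_self_of_rank_mul_mul_eq X hrank⟩
    calc W * A * W * X * (W * A * W) = W * (A * W * X * W * A) * W := by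
          simp only [Matrix.mul_assoc]
      _ = W * A * W := by rw [h]
  have h₂ : X * W * A * W * X = X * (W * A * W) * X := by simp only [Matrix.mul_assoc]
  rw [h₁, h₂]
end

section
/- Let A ∈ ℂ^{m×n}, W ∈ ℂ^{n×m}, and let k = ind(A,W). Then there exists X ∈ ℂ^{m×n} satisfying AWXWA = A, XWAWX = X, (WAWX)* = WAWX, and XW(AW)^{k+1} = (AW)^k (i.e., A has a {1',2',3',1^{k}'}-inverse) if and only if rank(WAW) = rank(A). -/
open Matrix

/-- The index of a square complex matrix: the smallest nonnegative integer `k` with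
`rank (M ^ k) = rank (M ^ (k + 1))`. -/
noncomputable def matIndex {p : ℕ} (M : Matrix (Fin p) (Fin p) ℂ) : ℕ :=
  sInf {k : ℕ | (M ^ k).rank = (M ^ (k + 1)).rank}

/-- The weighted index `ind(A, W) = max (ind (A * W)) (ind (W * A))`. -/
noncomputable def wIndex {m n : ℕ} (A : Matrix (Fin m) (Fin n) ℂ)
    (W : Matrix (Fin n) (Fin m) ℂ) : ℕ :=
  max (matIndex (A * W)) (matIndex (W * A))

/-!
If `X` is such an inverse, then `rank A ≤ rank X ≤ rank (W A W) ≤ rank A` by the outer equations.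

Conversely, `rank (W A W) = rank A` makes `A` factor as `A = D (W A) = (A W) C`, so any
`{1,3}`-inverse `G` of `W A W` (which exists because `rank (Bᴴ B) = rank B`) satisfies
`A W G W A = A` and `(W A W G)ᴴ = W A W G`. Beyond the index, `rank (A W)^k` is stable, which
yields `X₀` with `X₀ W (A W)^(k+1) = (A W)^k`. The corrected `Y = G + (1 - G W A W) X₀` keeps the
first two equations, since `A W (1 - G W A W) = 0`, and gains the third; finally `Y W A W Y` is
also an outer inverse and satisfies all four equations.
-/

namespace Matrix

section Factorization

variable {l m n : Type*} [Fintype m] [Fintype n]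

theorem exists_mul_eq_of_range_le {R : Type*} [CommSemiring R] {M : Matrix l m R}
    {N : Matrix l n R} (h : LinearMap.range N.mulVecLin ≤ LinearMap.range M.mulVecLin) :
    ∃ C : Matrix m n R, M * C = N := by
  have hcol (j : n) : ∃ x : m → R, M *ᵥ x = N.col j := by
    rw [range_mulVecLin] at h
    exact h (Submodule.subset_span ⟨j, rfl⟩)
  choose x hx using hcol
  exact ⟨(of x)ᵀ, ext fun i j => congrFun (hx j) i⟩

variable {K : Type*} [Field K]

theorem exists_mul_mul_eq_of_rank_mul_eq {M : Matrix l m K} {N : Matrix m n K}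
    (h : (M * N).rank = M.rank) : ∃ C : Matrix n m K, M * N * C = M := by
  have hle : LinearMap.range (M * N).mulVecLin ≤ LinearMap.range M.mulVecLin := by
    rw [mulVecLin_mul]
    exact LinearMap.range_comp_le_range _ _
  exact exists_mul_eq_of_range_le (Submodule.eq_of_le_of_finrank_eq hle h).ge

theorem exists_mul_mul_eq_of_rank_mul_eq' [Fintype l] {M : Matrix m n K} {N : Matrix l m K}
    (h : (N * M).rank = M.rank) : ∃ D : Matrix m l K, D * (N * M) = M := by
  rw [← rank_transpose, ← rank_transpose M, transpose_mul] at h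
  obtain ⟨C, hC⟩ := exists_mul_mul_eq_of_rank_mul_eq h
  exact ⟨Cᵀ, by simpa only [transpose_mul, transpose_transpose] using congrArg transpose hC⟩

theorem exists_rank_pow_eq_rank_pow_succ [DecidableEq m] (M : Matrix m m K) :
    ∃ k, (M ^ k).rank = (M ^ (k + 1)).rank := by
  let k := Function.argmin fun j => (M ^ j).rank
  refine ⟨k, le_antisymm (Function.argmin_le (fun j => (M ^ j).rank) (k + 1)) ?_⟩
  rw [pow_succ]
  exact rank_mul_le_left _ _

theorem exists_mul_pow_succ_eq_pow [DecidableEq m] {M : Matrix m m K} {k j : ℕ}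
    (h : (M ^ k).rank = (M ^ (k + 1)).rank) (hkj : k ≤ j) :
    ∃ D : Matrix m m K, D * M ^ (j + 1) = M ^ j := by
  rw [pow_succ'] at h
  obtain ⟨D, hD⟩ := exists_mul_mul_eq_of_rank_mul_eq' h.symm
  obtain ⟨d, rfl⟩ := Nat.exists_eq_add_of_le hkj
  refine ⟨D, ?_⟩
  rw [add_right_comm, pow_add, pow_succ', pow_add, ← Matrix.mul_assoc, hD]

theorem exists_isHermitian_mul_and_mul_mul_eq {R : Type*} [Field R] [PartialOrder R] [StarRing R]
    [StarOrderedRing R] (B : Matrix m n R) :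
    ∃ G : Matrix n m R, (B * G).IsHermitian ∧ B * G * B = B := by
  obtain ⟨C, hC⟩ := exists_mul_mul_eq_of_rank_mul_eq (M := Bᴴ) (N := B)
    (by rw [rank_conjTranspose_mul_self, rank_conjTranspose])
  have hC' : Cᴴ * Bᴴ * B = B := by
    simpa only [conjTranspose_mul, conjTranspose_conjTranspose, Matrix.mul_assoc]
      using congrArg conjTranspose hC
  have hherm : (B * C)ᴴ = B * C :=
    calc (B * C)ᴴ = Cᴴ * (Bᴴ * B * C) := by rw [conjTranspose_mul, hC]
      _ = B * C := by rw [← Matrix.mul_assoc, ← Matrix.mul_assoc, hC']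
  refine ⟨C, hherm, ?_⟩
  rw [← hherm, conjTranspose_mul, hC']

end Factorization

section Weighted

variable {m n : Type*} [Fintype m] [Fintype n]

theorem rank_mul_mul_eq_of_weighted_reflexive_inverse {K : Type*} [Field K] {A X : Matrix m n K}
    {W : Matrix n m K} (h1 : A * W * X * W * A = A) (h2 : X * W * A * W * X = X) :
    (W * A * W).rank = A.rank := by
  refine le_antisymm ?_ ?_
  · calc (W * A * W).rank = (W * (A * W)).rank := by rw [Matrix.mul_assoc]
      _ ≤ (A * W).rank := rank_mul_le_right _ _
      _ ≤ A.rank := rank_mul_le_left _ _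
  · calc A.rank = (A * W * X * W * A).rank := by rw [h1]
      _ ≤ (A * W * X).rank := (rank_mul_le_left _ _).trans (rank_mul_le_left _ _)
      _ ≤ X.rank := rank_mul_le_right _ _
      _ = (X * (W * A * W) * X).rank := by
        congr 1
        simpa only [Matrix.mul_assoc] using h2.symm
      _ ≤ (X * (W * A * W)).rank := rank_mul_le_left _ _
      _ ≤ (W * A * W).rank := rank_mul_le_right _ _

theorem exists_weighted_inner_inverse_of_rank_mul_mul_eq {K : Type*} [Field K] [PartialOrder K]
    [StarRing K] [StarOrderedRing K] {A : Matrix m n K} {W : Matrix n m K}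
    (h : (W * A * W).rank = A.rank) :
    ∃ G : Matrix m n K, A * W * G * W * A = A ∧ (W * A * W * G).IsHermitian := by
  obtain ⟨C, hC⟩ : ∃ C, A * W * C = A := exists_mul_mul_eq_of_rank_mul_eq <|
    le_antisymm (rank_mul_le_left A W) (h ▸ Matrix.mul_assoc W A W ▸ rank_mul_le_right _ _)
  obtain ⟨D, hD⟩ : ∃ D, D * (W * A) = A := exists_mul_mul_eq_of_rank_mul_eq' <|
    le_antisymm (rank_mul_le_right W A) (h ▸ rank_mul_le_left _ _)
  obtain ⟨G, hG3, hG1⟩ := exists_isHermitian_mul_and_mul_mul_eq (W * A * W)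
  refine ⟨G, ?_, hG3⟩
  calc A * W * G * W * A = D * (W * A) * W * G * W * (A * W * C) := by rw [hD, hC]
    _ = D * (W * A * W * G * (W * A * W)) * C := by simp only [Matrix.mul_assoc]
    _ = A := by rw [hG1, ← Matrix.mul_assoc, hD, hC]

variable [DecidableEq m] {R : Type*} [Ring R]

/-- `X` is a `{1',3',1^k'}`-inverse of `A` with weight `W`. -/
def IsW131kInverse [Star R] (A : Matrix m n R) (W : Matrix n m R) (k : ℕ)
    (X : Matrix m n R) : Prop :=
  A * W * X * W * A = A ∧ (W * A * W * X)ᴴ = W * A * W * X ∧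
    X * W * (A * W) ^ (k + 1) = (A * W) ^ k

/-- `X` is a `{1',2',3',1^k'}`-inverse of `A` with weight `W`. -/
def IsW1231kInverse [Star R] (A : Matrix m n R) (W : Matrix n m R) (k : ℕ)
    (X : Matrix m n R) : Prop :=
  A * W * X * W * A = A ∧ X * W * A * W * X = X ∧ (W * A * W * X)ᴴ = W * A * W * X ∧
    X * W * (A * W) ^ (k + 1) = (A * W) ^ k

variable {A : Matrix m n R} {W : Matrix n m R} {k : ℕ}

theorem mul_mul_mul_mul_pow_succ_eq_pow {D : Matrix m m R}
    (hD : D * (A * W) ^ (k + 1) = (A * W) ^ k) :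
    D * D * A * W * (A * W) ^ (k + 1) = (A * W) ^ k :=
  calc D * D * A * W * (A * W) ^ (k + 1) = D * D * (A * W * (A * W) ^ (k + 1)) := by
        simp only [Matrix.mul_assoc]
    _ = D * (D * (A * W) ^ (k + 1)) * (A * W) := by
        rw [(Commute.self_pow _ _).eq]
        simp only [Matrix.mul_assoc]
    _ = (A * W) ^ k := by rw [hD, Matrix.mul_assoc, ← pow_succ, hD]

variable [Star R]

theorem isW131kInverse_add_sub_mul_mul {G X₀ : Matrix m n R} (hG1 : A * W * G * W * A = A)
    (hG3 : (W * A * W * G)ᴴ = W * A * W * G) (hX₀ : X₀ * W * (A * W) ^ (k + 1) = (A * W) ^ k) :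
    IsW131kInverse A W k (G + (1 - G * W * A * W) * X₀) := by
  set Y := G + (1 - G * W * A * W) * X₀
  have hAWU : A * W * (1 - G * W * A * W) = 0 := by
    simp only [Matrix.mul_sub, Matrix.mul_one, ← Matrix.mul_assoc, hG1, sub_self]
  have hAWY : A * W * Y = A * W * G := by
    rw [Matrix.mul_add, ← Matrix.mul_assoc, hAWU, Matrix.zero_mul, add_zero]
  have hWAWY : W * A * W * Y = W * A * W * G := by
    simp only [Matrix.mul_assoc] at hAWY ⊢
    rw [hAWY]
  refine ⟨by rw [hAWY, hG1], by rw [hWAWY, hG3], ?_⟩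
  calc Y * W * (A * W) ^ (k + 1)
      = G * W * (A * W) ^ (k + 1) + (1 - G * W * A * W) * (X₀ * W * (A * W) ^ (k + 1)) := by
        simp only [Y, Matrix.add_mul, Matrix.mul_assoc]
    _ = (A * W) ^ k := by
        rw [hX₀, Matrix.sub_mul, Matrix.one_mul, pow_succ']
        simp only [Matrix.mul_assoc]
        abel

theorem IsW131kInverse.isW1231kInverse_mul_mul_mul_mul {Y : Matrix m n R}
    (hY : IsW131kInverse A W k Y) : IsW1231kInverse A W k (Y * W * A * W * Y) := by
  obtain ⟨h1, h3, h4⟩ := hY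
  have hA (Z : Matrix n n R) : A * (W * (Y * (W * (A * Z)))) = A * Z := by
    simp only [← Matrix.mul_assoc, h1]
  have hA' : A * (W * (Y * (W * A))) = A := by simpa only [Matrix.mul_assoc] using h1
  rw [pow_succ'] at h4
  simp only [Matrix.mul_assoc] at h3 h4
  refine ⟨?_, ?_, ?_, ?_⟩ <;> simp only [pow_succ', Matrix.mul_assoc, hA, hA', h3, h4]

end Weighted

end Matrix

/-- for `k = ind(A, W)`, `A` has a `{1',2',3',1^k'}`-inverse iff
`rank (W * A * W) = rank A`. -/
theorem stmt6 (m n : ℕ) (A : Matrix (Fin m) (Fin n) ℂ) (W : Matrix (Fin n) (Fin m) ℂ)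
    (k : ℕ) (hk : k = wIndex A W) :
    (∃ X : Matrix (Fin m) (Fin n) ℂ,
        A * W * X * W * A = A ∧
        X * W * A * W * X = X ∧
        (W * A * W * X)ᴴ = W * A * W * X ∧
        X * W * (A * W) ^ (k + 1) = (A * W) ^ k) ↔
      (W * A * W).rank = A.rank := by
  refine ⟨fun ⟨X, h1, h2, _⟩ => rank_mul_mul_eq_of_weighted_reflexive_inverse h1 h2, fun h => ?_⟩
  open scoped ComplexOrder in
  obtain ⟨G, hG1, hG3⟩ := exists_weighted_inner_inverse_of_rank_mul_mul_eq h
  have hindex : matIndex (A * W) ≤ k := hk ▸ le_max_left _ _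
  obtain ⟨D, hD⟩ := exists_mul_pow_succ_eq_pow
    (Nat.sInf_mem (exists_rank_pow_eq_rank_pow_succ (A * W))) hindex
  have hY := isW131kInverse_add_sub_mul_mul hG1 hG3 (mul_mul_mul_mul_pow_succ_eq_pow hD)
  exact ⟨_, hY.isW1231kInverse_mul_mul_mul_mul⟩
end

section
/- Let A ∈ ℂ^{m×n}, W ∈ ℂ^{n×m}, k = ind(A,W), rank(WAW) = rank(A), and let D be the W-weighted Drazin inverse of A. Then Z ∈ ℂ^{m×n} is a {1',2',3',1^{k}'}-inverse of A if and only if there exists a {1',2',3'}-inverse X of A such that Z = X + (I_m − XWAW)·D·WAW·X. Moreover, for every {1',2',3'}-inverse X of A and every Y ∈ ℂ^{m×n} satisfying YW(AW)^{k+1} = (AW)^k, the matrix X + (I_m − XWAW)·Y·WAW·X is a {1',2',3',1^{k}'}-inverse of A. -/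
open Matrix

lemma part2aux {m n : ℕ} (A X Y : Matrix (Fin m) (Fin n) ℂ) (W : Matrix (Fin n) (Fin m) ℂ)
    (k : ℕ)
    (hX1 : A * W * X * W * A = A) (hX2 : X * W * A * W * X = X)
    (hX3 : (W * A * W * X)ᴴ = W * A * W * X)
    (hY : Y * W * (A * W) ^ (k + 1) = (A * W) ^ k)
    (Z : Matrix (Fin m) (Fin n) ℂ)
    (hZ : Z = X + (1 - X * W * A * W) * Y * (W * A * W) * X) :
    A * W * Z * W * A = A ∧
      Z * W * A * W * Z = Z ∧
      (W * A * W * Z)ᴴ = W * A * W * Z ∧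
      Z * W * (A * W) ^ (k + 1) = (A * W) ^ k := by
  have hAWZ : A * W * Z = A * W * X := by
    simp only [hZ, Matrix.mul_add, Matrix.add_mul, Matrix.sub_mul, Matrix.mul_sub,
      Matrix.one_mul, ← Matrix.mul_assoc, hX1, sub_self, add_zero]
  have hWXA : W * A * W * X * W * A = W * A := by
    calc W * A * W * X * W * A = W * (A * W * X * W * A) := by
          simp only [Matrix.mul_assoc]
    _ = W * A := by rw [hX1]
  have hWAWZ : W * A * W * Z = W * A * W * X := by
    simp only [hZ, Matrix.mul_add, Matrix.add_mul, Matrix.sub_mul, Matrix.mul_sub,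
      Matrix.one_mul, ← Matrix.mul_assoc, hWXA, sub_self, add_zero]
  refine ⟨by rw [hAWZ, hX1], ?_, by rw [hWAWZ]; exact hX3, ?_⟩
  · -- Z*W*A*W*Z = Z
    have hX2r : X * (W * (A * (W * X))) = X := by
      simpa only [Matrix.mul_assoc] using hX2
    have hWAWZr : W * (A * (W * Z)) = W * (A * (W * X)) := by
      simpa only [Matrix.mul_assoc] using hWAWZ
    calc Z * W * A * W * Z = Z * (W * (A * (W * Z))) := by simp only [Matrix.mul_assoc]
      _ = Z * (W * (A * (W * X))) := by rw [hWAWZr]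
      _ = Z := by
          rw [hZ]
          simp only [Matrix.add_mul, Matrix.sub_mul, Matrix.mul_add, Matrix.mul_sub,
            Matrix.one_mul, Matrix.mul_assoc, hX2r]
  · -- Z*W*(A*W)^(k+1) = (A*W)^k
    have hsfx : A * (W * (X * (W * (A * (W * (A*W)^k))))) = A * (W * (A*W)^k) := by
      have := congrArg (· * (W * (A*W)^k)) hX1
      simpa only [Matrix.mul_assoc] using this
    have hY' : Y * (W * (A * (W * (A*W)^k))) = (A*W)^k := by
      have : Y * W * ((A*W) * (A*W)^k) = (A*W)^k := by rw [← pow_succ']; exact hY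
      simpa only [Matrix.mul_assoc] using this
    have hpow : (A*W)^(k+1) = A * (W * (A*W)^k) := by
      rw [pow_succ']; simp only [Matrix.mul_assoc]
    rw [hpow, hZ]
    simp only [Matrix.add_mul, Matrix.sub_mul, Matrix.mul_add, Matrix.mul_sub,
      Matrix.one_mul, Matrix.mul_assoc, hsfx, hY']
    abel

/-- representation of the set of `{1',2',3',1^k'}`-inverses in terms of
`{1',2',3'}`-inverses and the `W`-weighted Drazin inverse `D`;
moreover the same recipe works with any `Y` satisfying `Y*W*(A*W)^(k+1) = (A*W)^k`. -/
theorem stmt7 (m n : ℕ) (A : Matrix (Fin m) (Fin n) ℂ) (W : Matrix (Fin n) (Fin m) ℂ)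
    (k : ℕ) (hk : k = wIndex A W)
    (hrank : (W * A * W).rank = A.rank)
    (D : Matrix (Fin m) (Fin n) ℂ)
    (hD1 : D * W * (A * W) ^ (k + 1) = (A * W) ^ k)
    (hD2 : D * W * A * W * D = D)
    (hD3 : A * W * D = D * W * A) :
    (∀ Z : Matrix (Fin m) (Fin n) ℂ,
      (A * W * Z * W * A = A ∧
        Z * W * A * W * Z = Z ∧
        (W * A * W * Z)ᴴ = W * A * W * Z ∧
        Z * W * (A * W) ^ (k + 1) = (A * W) ^ k) ↔
      (∃ X : Matrix (Fin m) (Fin n) ℂ,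
        (A * W * X * W * A = A ∧
          X * W * A * W * X = X ∧
          (W * A * W * X)ᴴ = W * A * W * X) ∧
        Z = X + (1 - X * W * A * W) * D * (W * A * W) * X)) ∧
    (∀ X Y : Matrix (Fin m) (Fin n) ℂ,
      (A * W * X * W * A = A ∧
        X * W * A * W * X = X ∧
        (W * A * W * X)ᴴ = W * A * W * X) →
      Y * W * (A * W) ^ (k + 1) = (A * W) ^ k →
      ∀ Z : Matrix (Fin m) (Fin n) ℂ,
        Z = X + (1 - X * W * A * W) * Y * (W * A * W) * X →
        (A * W * Z * W * A = A ∧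
          Z * W * A * W * Z = Z ∧
          (W * A * W * Z)ᴴ = W * A * W * Z ∧
          Z * W * (A * W) ^ (k + 1) = (A * W) ^ k)) := by

  have hc : Commute (A * W) (D * W) := by
    show A * W * (D * W) = D * W * (A * W)
    have h := congrArg (· * W) hD3
    simp only [Matrix.mul_assoc] at h ⊢
    exact h
  have hPQD : A * W * (D * W) * D = D := by
    rw [hc.eq]
    simp only [Matrix.mul_assoc] at hD2 ⊢
    exact hD2
  have key : ∀ j : ℕ, (A * W * (D * W)) ^ j * D = D := by
    intro j
    induction j with
    | zero => simp
    | succ j ih =>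
      rw [pow_succ, Matrix.mul_assoc, hPQD, ih]
  have key2 : (A * W) ^ (k + 1) * ((D * W) ^ (k + 1) * D) = D := by
    have := key (k + 1)
    rwa [hc.mul_pow, Matrix.mul_assoc] at this
  constructor
  · intro Z
    constructor
    · rintro ⟨hZ1, hZ2, hZ3, hZ4⟩
      refine ⟨Z, ⟨hZ1, hZ2, hZ3⟩, ?_⟩
      have hZD : Z * W * A * W * D = D := by
        conv_lhs => rw [← key2]
        calc Z * W * A * W * ((A * W) ^ (k + 1) * ((D * W) ^ (k + 1) * D))
            = Z * W * (A * W * (A * W) ^ (k + 1)) * ((D * W) ^ (k + 1) * D) := by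
              simp only [Matrix.mul_assoc]
          _ = Z * W * ((A * W) ^ (k + 1) * (A * W)) * ((D * W) ^ (k + 1) * D) := by
              rw [← pow_succ, ← pow_succ']
          _ = Z * W * (A * W) ^ (k + 1) * (A * W) * ((D * W) ^ (k + 1) * D) := by
              simp only [Matrix.mul_assoc]
          _ = (A * W) ^ k * (A * W) * ((D * W) ^ (k + 1) * D) := by rw [hZ4]
          _ = (A * W) ^ (k + 1) * ((D * W) ^ (k + 1) * D) := by rw [← pow_succ]
          _ = D := key2
      have hzero : (1 - Z * W * A * W) * D = 0 := by
        rw [Matrix.sub_mul, Matrix.one_mul, hZD, sub_self]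
      rw [hzero, Matrix.zero_mul, Matrix.zero_mul, add_zero]
    · rintro ⟨X, ⟨hX1, hX2, hX3⟩, hZeq⟩
      exact part2aux A X D W k hX1 hX2 hX3 hD1 Z hZeq
  · rintro X Y ⟨hX1, hX2, hX3⟩ hY Z hZeq
    exact part2aux A X Y W k hX1 hX2 hX3 hY Z hZeq
end

section
/- Let A ∈ ℂ^{m×n}, W ∈ ℂ^{n×m}, k = ind(A,W), and suppose X is a {1',2',3',1^{k}'}-inverse of A. Set B = A + (AW)^{k+1}(XW)^k(I_n − WXWA). Then X is also a {1',2',3',1^{k}'}-inverse of B, i.e., BWXWB = B, XWBWX = X, (WBWX)* = WBWX, and XW(BW)^{k+1} = (BW)^k. -/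
open Matrix

private lemma mul_pow_swap {m n : ℕ} (P : Matrix (Fin m) (Fin n) ℂ)
    (Q : Matrix (Fin n) (Fin m) ℂ) : ∀ j : ℕ, P * (Q * P) ^ j = (P * Q) ^ j * P
  | 0 => by simp
  | (j+1) => by
      rw [pow_succ, ← Matrix.mul_assoc, mul_pow_swap P Q j, pow_succ]
      simp only [Matrix.mul_assoc]

set_option maxHeartbeats 1600000 in
/-- if `X` is a `{1',2',3',1^k'}`-inverse of `A` with `k = ind(A, W)`, then
`X` is also a `{1',2',3',1^k'}`-inverse of `B = A + (AW)^{k+1}(XW)^k(Iₙ - WXWA)`, where the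
rectangular product `(AW)^{k+1}(XW)^k` is read in the `W`-weighted sense as
`(A*W)^k * A * (W*X)^k` (for `W = 1` this is `A + A^{k+1} X^k (1 - XA)`). -/
theorem stmt12 (m n : ℕ) (A X : Matrix (Fin m) (Fin n) ℂ) (W : Matrix (Fin n) (Fin m) ℂ)
    (k : ℕ) (hk : k = wIndex A W)
    (h1 : A * W * X * W * A = A)
    (h2 : X * W * A * W * X = X)
    (h3 : (W * A * W * X)ᴴ = W * A * W * X)
    (h4 : X * W * (A * W) ^ (k + 1) = (A * W) ^ k)
    (B : Matrix (Fin m) (Fin n) ℂ)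
    (hB : B = A + (A * W) ^ k * A * (W * X) ^ k * (1 - W * X * W * A)) :
    B * W * X * W * B = B ∧
    X * W * B * W * X = X ∧
    (W * B * W * X)ᴴ = W * B * W * X ∧
    X * W * (B * W) ^ (k + 1) = (B * W) ^ k := by
  obtain ⟨C, hC⟩ : ∃ C : Matrix (Fin m) (Fin n) ℂ,
      C = (A * W) ^ k * A * (W * X) ^ k * (1 - W * X * W * A) := ⟨_, rfl⟩
  rw [← hC] at hB
  -- basic zero lemmas
  have hEWX : (W*X*W*A)*(W*X) = W*X := by
    calc (W*X*W*A)*(W*X) = W*(X*W*A*W*X) := by simp only [Matrix.mul_assoc]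
    _ = W*X := by rw [h2]
  have hZ1 : (1 - W*X*W*A)*(W*X) = 0 := by
    rw [Matrix.sub_mul, Matrix.one_mul, hEWX, sub_self]
  have hEE : (W*X*W*A)*(W*X*W*A) = W*X*W*A := by
    calc (W*X*W*A)*(W*X*W*A) = W*(X*W*A*W*X)*(W*A) := by simp only [Matrix.mul_assoc]
    _ = W*X*(W*A) := by rw [h2]
    _ = W*X*W*A := by simp only [Matrix.mul_assoc]
  have hZ2 : (1 - W*X*W*A)*(W*X*W*A) = 0 := by
    rw [Matrix.sub_mul, Matrix.one_mul, hEE, sub_self]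
  have hCWX' : C*W*X = 0 := by
    calc C*W*X = (A*W)^k*A*(W*X)^k*((1 - W*X*W*A)*(W*X)) := by
          rw [hC]; simp only [Matrix.mul_assoc]
    _ = 0 := by rw [hZ1, Matrix.mul_zero]
  have hCWXWA' : C*W*X*W*A = 0 := by
    calc C*W*X*W*A = (A*W)^k*A*(W*X)^k*((1 - W*X*W*A)*(W*X*W*A)) := by
          rw [hC]; simp only [Matrix.mul_assoc]
    _ = 0 := by rw [hZ2, Matrix.mul_zero]
  have h1' : ∀ j : ℕ, A*W*X*W*((A*W)^j*A) = (A*W)^j*A := by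
    intro j
    rw [← mul_pow_swap A W j]
    calc A*W*X*W*(A*(W*A)^j) = (A*W*X*W*A)*(W*A)^j := by simp only [Matrix.mul_assoc]
    _ = A*(W*A)^j := by rw [h1]
  have hAWXWC : A*W*X*W*C = C := by
    calc A*W*X*W*C = A*W*X*W*((A*W)^k*A)*((W*X)^k*(1 - W*X*W*A)) := by
          rw [hC]; simp only [Matrix.mul_assoc]
    _ = (A*W)^k*A*((W*X)^k*(1 - W*X*W*A)) := by rw [h1' k]
    _ = C := by rw [hC]; simp only [Matrix.mul_assoc]
  have hCWXWC : C*W*X*W*C = 0 := by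
    calc C*W*X*W*C = (C*W*X)*(W*C) := by simp only [Matrix.mul_assoc]
    _ = 0 := by rw [hCWX', Matrix.zero_mul]
  have hXWCWX : X*W*C*W*X = 0 := by
    calc X*W*C*W*X = X*W*(C*W*X) := by simp only [Matrix.mul_assoc]
    _ = 0 := by rw [hCWX', Matrix.mul_zero]
  have hWCWX : W*C*W*X = 0 := by
    calc W*C*W*X = W*(C*W*X) := by simp only [Matrix.mul_assoc]
    _ = 0 := by rw [hCWX', Matrix.mul_zero]
  -- Goal 1
  have goal1 : B * W * X * W * B = B := by
    conv_lhs => rw [hB]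
    simp only [Matrix.add_mul, Matrix.mul_add]
    rw [h1, hAWXWC, hCWXWA', hCWXWC, hB]
    abel
  -- Goal 2
  have goal2 : X * W * B * W * X = X := by
    conv_lhs => rw [hB]
    simp only [Matrix.add_mul, Matrix.mul_add]
    rw [h2, hXWCWX, add_zero]
  -- Goal 3
  have hWBWX : W*B*W*X = W*A*W*X := by
    conv_lhs => rw [hB]
    simp only [Matrix.add_mul, Matrix.mul_add]
    rw [hWCWX, add_zero]
  have goal3 : (W * B * W * X)ᴴ = W * B * W * X := by
    rw [hWBWX]; exact h3
  -- Goal 4 machinery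
  have hpow : ∀ a : ℕ, (A*W)*(A*W)^(a+k) = (A*W)^(k+1+a) := by
    intro a; rw [← pow_succ']; congr 1; omega
  have h4' : ∀ a : ℕ, X*W*(A*W)^(k+1+a) = (A*W)^(a+k) := by
    intro a
    rw [pow_add, ← Matrix.mul_assoc, h4, ← pow_add, Nat.add_comm k a]
  have hKey : ∀ a : ℕ, (1 - W*X*W*A)*(W*(A*W)^(a+k)*A) = 0 := by
    intro a
    have e1 : (W*X*W*A)*(W*(A*W)^(a+k)*A) = W*(A*W)^(a+k)*A := by
      calc (W*X*W*A)*(W*(A*W)^(a+k)*A)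
          = W*(X*W*((A*W)*(A*W)^(a+k)))*A := by simp only [Matrix.mul_assoc]
        _ = W*(X*W*(A*W)^(k+1+a))*A := by rw [hpow a]
        _ = W*(A*W)^(a+k)*A := by rw [h4' a]
    rw [Matrix.sub_mul, Matrix.one_mul, e1, sub_self]
  have hKey0 : (1 - W*X*W*A)*(W*(A*W)^k) = 0 := by
    have e1 : (W*X*W*A)*(W*(A*W)^k) = W*(A*W)^k := by
      calc (W*X*W*A)*(W*(A*W)^k)
          = W*(X*W*((A*W)*(A*W)^k)) := by simp only [Matrix.mul_assoc]
        _ = W*(X*W*(A*W)^(k+1)) := by rw [← pow_succ']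
        _ = W*(A*W)^k := by rw [h4]
    rw [Matrix.sub_mul, Matrix.one_mul, e1, sub_self]
  have hDD : ∀ a : ℕ, C*W*(A*W)^a*(C*W) = 0 := by
    intro a
    calc C*W*(A*W)^a*(C*W)
        = (A*W)^k*A*(W*X)^k*(((1 - W*X*W*A)*(W*((A*W)^a*(A*W)^k)*A))*((W*X)^k*((1 - W*X*W*A)*W))) := by
          rw [hC]; simp only [Matrix.mul_assoc]
      _ = (A*W)^k*A*(W*X)^k*(((1 - W*X*W*A)*(W*(A*W)^(a+k)*A))*((W*X)^k*((1 - W*X*W*A)*W))) := by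
          rw [← pow_add]
      _ = 0 := by rw [hKey a, Matrix.zero_mul, Matrix.mul_zero]
  have hDAWk : C*W*(A*W)^k = 0 := by
    calc C*W*(A*W)^k = (A*W)^k*A*(W*X)^k*((1 - W*X*W*A)*(W*(A*W)^k)) := by
          rw [hC]; simp only [Matrix.mul_assoc]
    _ = 0 := by rw [hKey0, Matrix.mul_zero]
  have hXWAWD : ∀ a : ℕ, X*W*(A*W)^(a+1)*(C*W) = (A*W)^a*(C*W) := by
    intro a
    calc X*W*(A*W)^(a+1)*(C*W)
        = X*W*((A*W)^(a+1)*(A*W)^k)*(A*((W*X)^k*((1 - W*X*W*A)*W))) := by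
          rw [hC]; simp only [Matrix.mul_assoc]
      _ = X*W*(A*W)^(k+1+a)*(A*((W*X)^k*((1 - W*X*W*A)*W))) := by
          rw [← pow_add, show a+1+k = k+1+a from by omega]
      _ = (A*W)^(a+k)*(A*((W*X)^k*((1 - W*X*W*A)*W))) := by rw [h4' a]
      _ = (A*W)^a*(C*W) := by rw [hC, pow_add]; simp only [Matrix.mul_assoc]
  have hBW : B*W = A*W + C*W := by rw [hB, Matrix.add_mul]
  have hBWD : ∀ j : ℕ, (B*W)^j*(C*W) = (A*W)^j*(C*W) := by
    intro j
    induction j with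
    | zero => simp
    | succ j ih =>
      calc (B*W)^(j+1)*(C*W) = (B*W)*((B*W)^j*(C*W)) := by
            rw [pow_succ', Matrix.mul_assoc]
        _ = (B*W)*((A*W)^j*(C*W)) := by rw [ih]
        _ = (A*W)*((A*W)^j*(C*W)) + (C*W)*((A*W)^j*(C*W)) := by
            rw [hBW, Matrix.add_mul]
        _ = (A*W)^(j+1)*(C*W) + C*W*(A*W)^j*(C*W) := by
            rw [pow_succ']; simp only [Matrix.mul_assoc]
        _ = (A*W)^(j+1)*(C*W) := by rw [hDD j, add_zero]
  have hDBW : ∀ j : ℕ, C*W*(B*W)^j = C*W*(A*W)^j := by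
    intro j
    induction j with
    | zero => simp
    | succ j ih =>
      calc C*W*(B*W)^(j+1) = (C*W*(B*W)^j)*(B*W) := by
            rw [pow_succ, ← Matrix.mul_assoc]
        _ = (C*W*(A*W)^j)*(B*W) := by rw [ih]
        _ = C*W*(A*W)^j*(A*W) + C*W*(A*W)^j*(C*W) := by
            rw [hBW, Matrix.mul_add]
        _ = C*W*(A*W)^(j+1) := by
            rw [hDD j, add_zero, pow_succ]; simp only [Matrix.mul_assoc]
  have L6 : ∀ j : ℕ, j ≤ k → X*W*(A*W)*((B*W)^j*(A*W)^(k-j)) = (B*W)^j*(A*W)^(k-j) := by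
    intro j
    induction j with
    | zero =>
      intro _
      simp only [pow_zero, Matrix.one_mul, Nat.sub_zero]
      rw [Matrix.mul_assoc, ← pow_succ', h4]
    | succ j ih =>
      intro hjk
      have hj : j ≤ k := by omega
      have hr : k - j = (k - (j+1)) + 1 := by omega
      have hb : (B*W)*(A*W)^(k-(j+1)) = (A*W)^(k-j) + (C*W)*(A*W)^(k-(j+1)) := by
        rw [hBW, Matrix.add_mul, hr, pow_succ']
      have hstep : (B*W)^(j+1)*(A*W)^(k-(j+1))
          = (B*W)^j*(A*W)^(k-j) + (A*W)^j*(C*W)*(A*W)^(k-(j+1)) := by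
        calc (B*W)^(j+1)*(A*W)^(k-(j+1))
            = (B*W)^j*((B*W)*(A*W)^(k-(j+1))) := by rw [pow_succ, Matrix.mul_assoc]
          _ = (B*W)^j*((A*W)^(k-j) + (C*W)*(A*W)^(k-(j+1))) := by rw [hb]
          _ = (B*W)^j*(A*W)^(k-j) + (B*W)^j*((C*W)*(A*W)^(k-(j+1))) := by
              rw [Matrix.mul_add]
          _ = (B*W)^j*(A*W)^(k-j) + (A*W)^j*(C*W)*(A*W)^(k-(j+1)) := by
              rw [show (B*W)^j*((C*W)*(A*W)^(k-(j+1))) = ((B*W)^j*(C*W))*(A*W)^(k-(j+1)) from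
                (Matrix.mul_assoc _ _ _).symm, hBWD j]
      have h2nd : X*W*(A*W)*((A*W)^j*(C*W)*(A*W)^(k-(j+1)))
          = (A*W)^j*(C*W)*(A*W)^(k-(j+1)) := by
        calc X*W*(A*W)*((A*W)^j*(C*W)*(A*W)^(k-(j+1)))
            = (X*W*(A*W)^(j+1)*(C*W))*(A*W)^(k-(j+1)) := by
              rw [pow_succ']; simp only [Matrix.mul_assoc]
          _ = (A*W)^j*(C*W)*(A*W)^(k-(j+1)) := by rw [hXWAWD j]
      calc X*W*(A*W)*((B*W)^(j+1)*(A*W)^(k-(j+1)))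
          = X*W*(A*W)*((B*W)^j*(A*W)^(k-j)) + X*W*(A*W)*((A*W)^j*(C*W)*(A*W)^(k-(j+1))) := by
            rw [hstep, Matrix.mul_add]
        _ = (B*W)^j*(A*W)^(k-j) + (A*W)^j*(C*W)*(A*W)^(k-(j+1)) := by
            rw [ih hj, h2nd]
        _ = (B*W)^(j+1)*(A*W)^(k-(j+1)) := hstep.symm
  have hBWk1 : (B*W)^(k+1) = (A*W)*(B*W)^k := by
    calc (B*W)^(k+1) = (B*W)*(B*W)^k := by rw [pow_succ']
      _ = (A*W)*(B*W)^k + (C*W)*(B*W)^k := by rw [hBW, Matrix.add_mul]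
      _ = (A*W)*(B*W)^k + C*W*(A*W)^k := by rw [hDBW k]
      _ = (A*W)*(B*W)^k := by rw [hDAWk, add_zero]
  have goal4 : X * W * (B * W) ^ (k + 1) = (B * W) ^ k := by
    rw [hBWk1, ← Matrix.mul_assoc]
    have h := L6 k le_rfl
    simp only [Nat.sub_self, pow_zero, Matrix.mul_one] at h
    exact h
  exact ⟨goal1, goal2, goal3, goal4⟩
end

section
/- Let A, B ∈ ℂ^{m×n} and W ∈ ℂ^{n×m}. If there exists X ∈ ℂ^{m×n} that is simultaneously a {1',2',3'}-inverse of A and of B, and there exists Y ∈ ℂ^{m×n} that is simultaneously a {1',2',4'}-inverse of A and of B, then WAW = WBW. -/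
open Matrix

lemma aux13 {k l : ℕ} (P Q : Matrix (Fin k) (Fin l) ℂ) (X Y : Matrix (Fin l) (Fin k) ℂ)
    (hP2 : X * P * X = X) (hP3 : (P * X)ᴴ = P * X)
    (hQ1 : Q * X * Q = Q) (hQ2 : X * Q * X = X) (hQ3 : (Q * X)ᴴ = Q * X)
    (hP1' : P * Y * P = P) (hP2' : Y * P * Y = Y) (hP3' : (Y * P)ᴴ = Y * P)
    (hQ2' : Y * Q * Y = Y) (hQ3' : (Y * Q)ᴴ = Y * Q) :
    P = Q := by
  -- Step 1: P*X = Q*X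
  have h1 : P * X = P * X * (Q * X) := by
    conv_lhs => rw [← hQ2]
    simp only [Matrix.mul_assoc]
  have h2 : P * X = Q * X * (P * X) := by
    have h := congrArg conjTranspose h1
    rw [hP3] at h
    rw [conjTranspose_mul, hP3, hQ3] at h
    exact h
  have h3 : Q * X = Q * X * (P * X) := by
    conv_lhs => rw [← hP2]
    simp only [Matrix.mul_assoc]
  have hXeq : P * X = Q * X := by rw [h2, ← h3]
  -- Step 2: Y*P = Y*Q
  have g1 : Y * P = Y * Q * (Y * P) := by
    conv_lhs => rw [← hQ2']
    simp only [Matrix.mul_assoc]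
  have g2 : Y * P = Y * P * (Y * Q) := by
    have g := congrArg conjTranspose g1
    rw [hP3'] at g
    rw [conjTranspose_mul, hP3', hQ3'] at g
    exact g
  have g3 : Y * Q = Y * P * (Y * Q) := by
    conv_lhs => rw [← hP2']
    simp only [Matrix.mul_assoc]
  have hYeq : Y * P = Y * Q := by rw [g2, ← g3]
  -- Step 3: combine
  have hQPXQ : Q = P * X * Q := by
    conv_lhs => rw [← hQ1]
    rw [← hXeq]
  calc P = P * Y * P := hP1'.symm
  _ = P * (Y * P) := by rw [Matrix.mul_assoc]
  _ = P * (Y * Q) := by rw [hYeq]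
  _ = P * (Y * (P * X * Q)) := by rw [← hQPXQ]
  _ = P * Y * P * X * Q := by simp only [Matrix.mul_assoc]
  _ = P * X * Q := by rw [hP1']
  _ = Q := hQPXQ.symm

/-- if `A` and `B` share a common `{1',2',3'}`-inverse and a common
`{1',2',4'}`-inverse, then `W*A*W = W*B*W`. -/
theorem stmt13 (m n : ℕ) (A B : Matrix (Fin m) (Fin n) ℂ) (W : Matrix (Fin n) (Fin m) ℂ)
    (X : Matrix (Fin m) (Fin n) ℂ)
    (hXA : A * W * X * W * A = A ∧ X * W * A * W * X = X ∧
      (W * A * W * X)ᴴ = W * A * W * X)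
    (hXB : B * W * X * W * B = B ∧ X * W * B * W * X = X ∧
      (W * B * W * X)ᴴ = W * B * W * X)
    (Y : Matrix (Fin m) (Fin n) ℂ)
    (hYA : A * W * Y * W * A = A ∧ Y * W * A * W * Y = Y ∧
      (Y * W * A * W)ᴴ = Y * W * A * W)
    (hYB : B * W * Y * W * B = B ∧ Y * W * B * W * Y = Y ∧
      (Y * W * B * W)ᴴ = Y * W * B * W) :
    W * A * W = W * B * W := by
  apply aux13 (W * A * W) (W * B * W) X Y
  · simpa only [Matrix.mul_assoc] using hXA.2.1
  · exact hXA.2.2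
  · simpa only [Matrix.mul_assoc] using congrArg (fun M => W * M * W) hXB.1
  · simpa only [Matrix.mul_assoc] using hXB.2.1
  · exact hXB.2.2
  · simpa only [Matrix.mul_assoc] using congrArg (fun M => W * M * W) hYA.1
  · simpa only [Matrix.mul_assoc] using hYA.2.1
  · simpa only [Matrix.mul_assoc] using hYA.2.2
  · simpa only [Matrix.mul_assoc] using hYB.2.1
  · simpa only [Matrix.mul_assoc] using hYB.2.2
end

section
/- Let A ∈ ℂ^{m×n}, W ∈ ℂ^{n×m}, k = ind(A,W), and let X be a {1',2',3',1^{k}'}-inverse of A. Then: (i) WAWX is the orthogonal projector onto the column space of WA, i.e., (WAWX)^2 = WAWX, (WAWX)* = WAWX, and the column space of WAWX equals the column space of WA; (ii) XWAW is the projector onto the column space of X along the null space of AW, i.e., (XWAW)^2 = XWAW, the column space of XWAW equals the column space of X, and the null space of XWAW equals the null space of AW. -/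
open Matrix

private lemma range_le_of_factor {a b c : ℕ} (N : Matrix (Fin a) (Fin b) ℂ)
    (C : Matrix (Fin b) (Fin c) ℂ) :
    LinearMap.range (N * C).mulVecLin ≤ LinearMap.range N.mulVecLin := by
  rintro x ⟨v, rfl⟩
  exact ⟨C.mulVecLin v, by simp [Matrix.mulVecLin, Matrix.mulVec_mulVec]⟩

private lemma ker_le_of_factor {a b c : ℕ} (C : Matrix (Fin a) (Fin b) ℂ)
    (N : Matrix (Fin b) (Fin c) ℂ) :
    LinearMap.ker N.mulVecLin ≤ LinearMap.ker (C * N).mulVecLin := by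
  intro v hv
  simp only [LinearMap.mem_ker, Matrix.mulVecLin_apply] at *
  rw [← Matrix.mulVec_mulVec, hv, Matrix.mulVec_zero]

/-- if `X` is a `{1',2',3',1^k'}`-inverse of `A` with `k = ind(A, W)`, then
`WAWX` is the orthogonal projector onto the column space of `WA`, and `XWAW` is the
projector onto the column space of `X` along the null space of `AW`. -/
theorem stmt16 (m n : ℕ) (A X : Matrix (Fin m) (Fin n) ℂ) (W : Matrix (Fin n) (Fin m) ℂ)
    (k : ℕ) (hk : k = wIndex A W)
    (h1 : A * W * X * W * A = A)
    (h2 : X * W * A * W * X = X)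
    (h3 : (W * A * W * X)ᴴ = W * A * W * X)
    (h4 : X * W * (A * W) ^ (k + 1) = (A * W) ^ k) :
    ((W * A * W * X) * (W * A * W * X) = W * A * W * X ∧
      (W * A * W * X)ᴴ = W * A * W * X ∧
      LinearMap.range (W * A * W * X).mulVecLin = LinearMap.range (W * A).mulVecLin) ∧
    ((X * W * A * W) * (X * W * A * W) = X * W * A * W ∧
      LinearMap.range (X * W * A * W).mulVecLin = LinearMap.range X.mulVecLin ∧
      LinearMap.ker (X * W * A * W).mulVecLin = LinearMap.ker (A * W).mulVecLin) := by
  refine ⟨⟨?_, h3, ?_⟩, ?_, ?_, ?_⟩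
  · calc (W * A * W * X) * (W * A * W * X)
        = W * (A * W * X * W * A) * (W * X) := by simp only [Matrix.mul_assoc]
      _ = W * A * W * X := by rw [h1]; simp only [Matrix.mul_assoc]
  · refine le_antisymm ?_ ?_
    · have : W * A * W * X = (W * A) * (W * X) := by simp only [Matrix.mul_assoc]
      rw [this]; exact range_le_of_factor _ _
    · have : W * A = (W * A * W * X) * (W * A) := by
        calc W * A = W * (A * W * X * W * A) := by rw [h1]
          _ = (W * A * W * X) * (W * A) := by simp only [Matrix.mul_assoc]
      conv_lhs => rw [this]
      exact range_le_of_factor _ _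
  · calc (X * W * A * W) * (X * W * A * W)
        = (X * W * A * W * X) * (W * A * W) := by simp only [Matrix.mul_assoc]
      _ = X * W * A * W := by rw [h2]; simp only [Matrix.mul_assoc]
  · refine le_antisymm ?_ ?_
    · have : X * W * A * W = X * (W * A * W) := by simp only [Matrix.mul_assoc]
      rw [this]; exact range_le_of_factor _ _
    · rintro x ⟨v, rfl⟩
      refine ⟨X.mulVecLin v, ?_⟩
      simp only [Matrix.mulVecLin_apply, Matrix.mulVec_mulVec]
      rw [h2]
  · refine le_antisymm ?_ ?_
    · have hAW : A * W = (A * W * X * W) * (A * W) := by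
        calc A * W = (A * W * X * W * A) * W := by rw [h1]
          _ = (A * W * X * W) * (A * W) := by simp only [Matrix.mul_assoc]
      intro v hv
      simp only [LinearMap.mem_ker, Matrix.mulVecLin_apply] at *
      have e : A * W = (A * W) * (X * W * A * W) := by
        calc A * W = (A * W * X * W) * (A * W) := hAW
          _ = (A * W) * (X * W * A * W) := by simp only [Matrix.mul_assoc]
      have : (A * W) *ᵥ v = ((A * W) * (X * W * A * W)) *ᵥ v :=
        congrArg (fun M => M *ᵥ v) e
      rw [this, ← Matrix.mulVec_mulVec, hv, Matrix.mulVec_zero]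
    · have : X * W * A * W = (X * W) * (A * W) := by simp only [Matrix.mul_assoc]
      rw [this]; exact ker_le_of_factor _ _
end

section
/- Let A ∈ ℂ^{m×n}, W ∈ ℂ^{n×m}, k = ind(A,W), and let D be the W-weighted Drazin inverse of A. If X is a {1',2',3',1^{k}'}-inverse of A, then D = (XW)^{k+2}(AW)^k A. -/
open Matrix

/-- Key abstract ring lemma. -/
lemma key_ring {R : Type*} [Ring R] (E P Y : R) (k : ℕ)
    (hcomm : E * P = P * E) (hPEP : P * E * P = P)
    (hb : P * E ^ (k + 1) = E ^ k) (ha : Y * E ^ (k + 1) = E ^ k) :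
    Y ^ (k + 2) * E ^ k = P ^ 2 := by
  have hc : Commute E P := hcomm
  have step : ∀ (Z : R), Z * E ^ (k + 1) = E ^ k →
      ∀ j, Z ^ j * E ^ (k + j) = E ^ k := by
    intro Z hZ j
    induction j with
    | zero => simp
    | succ j ih =>
      have e1 : Z ^ (j + 1) * E ^ (k + (j + 1)) = Z ^ j * (Z * E ^ (k + 1)) * E ^ j := by
        rw [show k + (j + 1) = (k + 1) + j by ring, pow_succ, pow_add]
        noncomm_ring
      rw [e1, hZ, mul_assoc, ← pow_add, ih]
  have ha' := step Y ha
  have hb' := step P hb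
  have hproj : ∀ j, P ^ 2 * (E * P) ^ j = P ^ 2 := by
    intro j
    induction j with
    | zero => simp
    | succ j ih =>
      have e2 : P ^ 2 * (E * P) = P * (P * E * P) := by
        rw [sq, mul_assoc, ← mul_assoc P E P]
      rw [pow_succ (E * P) j, ← mul_assoc, ih, e2, hPEP, ← sq]
  have hEk : E ^ k = E ^ (2 * k + 2) * P ^ (k + 2) := by
    have h := hb' (k + 2)
    rw [show k + (k + 2) = 2 * k + 2 by ring] at h
    rw [← h]
    exact (hc.symm.pow_pow _ _).eq
  calc Y ^ (k + 2) * E ^ k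
      = Y ^ (k + 2) * (E ^ (2 * k + 2) * P ^ (k + 2)) := by rw [← hEk]
    _ = (Y ^ (k + 2) * E ^ (k + (k + 2))) * P ^ (k + 2) := by
        rw [← mul_assoc, show 2 * k + 2 = k + (k + 2) by ring]
    _ = E ^ k * P ^ (k + 2) := by rw [ha' (k + 2)]
    _ = P ^ (k + 2) * E ^ k := (hc.pow_pow k (k + 2)).eq
    _ = P ^ 2 * (E * P) ^ k := by
        rw [show k + 2 = 2 + k by ring, pow_add, mul_assoc,
          (hc.symm.pow_pow k k).eq, ← hc.mul_pow]
    _ = P ^ 2 := hproj k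

/-- if `X` is a `{1',2',3',1^k'}`-inverse of `A` with `k = ind(A, W)` and
`D` is the `W`-weighted Drazin inverse of `A`, then `D = (XW)^{k+2} (AW)^k A`. -/
theorem stmt17 (m n : ℕ) (A X : Matrix (Fin m) (Fin n) ℂ) (W : Matrix (Fin n) (Fin m) ℂ)
    (k : ℕ) (hk : k = wIndex A W)
    (D : Matrix (Fin m) (Fin n) ℂ)
    (hD1 : D * W * (A * W) ^ (k + 1) = (A * W) ^ k)
    (hD2 : D * W * A * W * D = D)
    (hD3 : A * W * D = D * W * A)
    (h1 : A * W * X * W * A = A)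
    (h2 : X * W * A * W * X = X)
    (h3 : (W * A * W * X)ᴴ = W * A * W * X)
    (h4 : X * W * (A * W) ^ (k + 1) = (A * W) ^ k) :
    D = (X * W) ^ (k + 2) * (A * W) ^ k * A := by
  have hcomm : (A * W) * (D * W) = (D * W) * (A * W) := by
    rw [← Matrix.mul_assoc, hD3, Matrix.mul_assoc]
  have hPEP : (D * W) * (A * W) * (D * W) = D * W := by
    have e : (D * W) * (A * W) * (D * W) = (D * W * A * W * D) * W := by
      simp only [Matrix.mul_assoc]
    rw [e, hD2]
  have hkey := key_ring (A * W) (D * W) (X * W) k hcomm hPEP hD1 h4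
  have h5 : D = (D * W) * ((D * W) * A) := by
    conv_lhs => rw [← hD2]
    rw [show D * W * A * W * D = (D * W) * (A * W * D) by simp only [Matrix.mul_assoc], hD3]
  calc D = (D * W) * ((D * W) * A) := h5
    _ = (D * W) ^ 2 * A := by simp only [sq, Matrix.mul_assoc]
    _ = (X * W) ^ (k + 2) * (A * W) ^ k * A := by rw [hkey]
end

section
/- Let A, X ∈ ℂ^{m×n}, W ∈ ℂ^{n×m}, k = ind(A,W), and suppose X is a {1',2',3'}-inverse of A. Then X is a {1',2',3',1^{k}'}-inverse of A (i.e., XW(AW)^{k+1} = (AW)^k) if and only if for every subspace S of ℂ^m, AW·S = S implies XW·S = S, where M·S denotes the image of S under the linear map v ↦ Mv. -/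
open Matrix

private lemma range_pow_succ {m : ℕ} (B : Matrix (Fin m) (Fin m) ℂ) (j : ℕ) :
    LinearMap.range ((B ^ (j + 1)).mulVecLin) =
      (LinearMap.range ((B ^ j).mulVecLin)).map B.mulVecLin := by
  rw [pow_succ', Matrix.mulVecLin_mul, LinearMap.range_comp]

private lemma range_pow_succ_le {m : ℕ} (B : Matrix (Fin m) (Fin m) ℂ) (j : ℕ) :
    LinearMap.range ((B ^ (j + 1)).mulVecLin) ≤ LinearMap.range ((B ^ j).mulVecLin) := by
  rw [pow_succ, Matrix.mulVecLin_mul, LinearMap.range_comp]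
  exact LinearMap.map_le_range

private lemma rank_pow_succ_le {m : ℕ} (B : Matrix (Fin m) (Fin m) ℂ) (j : ℕ) :
    (B ^ (j + 1)).rank ≤ (B ^ j).rank :=
  Submodule.finrank_mono (range_pow_succ_le B j)

private lemma range_eq_of_rank_eq {m : ℕ} (B : Matrix (Fin m) (Fin m) ℂ) (j : ℕ)
    (h : (B ^ j).rank = (B ^ (j + 1)).rank) :
    LinearMap.range ((B ^ (j + 1)).mulVecLin) = LinearMap.range ((B ^ j).mulVecLin) :=
  Submodule.eq_of_le_of_finrank_eq (range_pow_succ_le B j) h.symm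

private lemma index_set_nonempty {m : ℕ} (B : Matrix (Fin m) (Fin m) ℂ) :
    {k : ℕ | (B ^ k).rank = (B ^ (k + 1)).rank}.Nonempty := by
  by_contra h
  rw [Set.not_nonempty_iff_eq_empty] at h
  have hlt : ∀ j, (B ^ (j + 1)).rank < (B ^ j).rank := by
    intro j
    refine lt_of_le_of_ne (rank_pow_succ_le B j) fun he => ?_
    have : j ∈ {k : ℕ | (B ^ k).rank = (B ^ (k + 1)).rank} := he.symm
    simp [h] at this
  have key : ∀ j, (B ^ j).rank + j ≤ (B ^ 0).rank := by
    intro j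
    induction j with
    | zero => simp
    | succ i ih =>
      have := hlt i
      omega
  have := key ((B ^ 0).rank + 1)
  omega

/-- Ranges of powers stabilize from the index onwards. -/
private lemma range_stable {m : ℕ} (B : Matrix (Fin m) (Fin m) ℂ) (j : ℕ)
    (hj : matIndex B ≤ j) :
    LinearMap.range ((B ^ j).mulVecLin) = LinearMap.range ((B ^ matIndex B).mulVecLin) := by
  obtain ⟨i, rfl⟩ := Nat.exists_eq_add_of_le hj
  induction i with
  | zero => rfl
  | succ i ih =>
    have hmem : matIndex B ∈ {k : ℕ | (B ^ k).rank = (B ^ (k + 1)).rank} :=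
      Nat.sInf_mem (index_set_nonempty B)
    have h0 : LinearMap.range ((B ^ (matIndex B + 1)).mulVecLin) =
        LinearMap.range ((B ^ matIndex B).mulVecLin) :=
      range_eq_of_rank_eq B _ hmem
    have : matIndex B + (i + 1) = (matIndex B + i) + 1 := by omega
    rw [this, range_pow_succ, ih (Nat.le_add_right _ _), ← range_pow_succ, h0]

/-- a `{1',2',3'}`-inverse `X` of `A` is a `{1',2',3',1^k'}`-inverse of `A`
(with `k = ind(A, W)`) iff every subspace `S` of `ℂ^m` invariant under `A*W` in the sense
`(A*W) · S = S` satisfies `(X*W) · S = S`. -/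
theorem stmt19 (m n : ℕ) (A X : Matrix (Fin m) (Fin n) ℂ) (W : Matrix (Fin n) (Fin m) ℂ)
    (k : ℕ) (hk : k = wIndex A W)
    (h1 : A * W * X * W * A = A)
    (h2 : X * W * A * W * X = X)
    (h3 : (W * A * W * X)ᴴ = W * A * W * X) :
    X * W * (A * W) ^ (k + 1) = (A * W) ^ k ↔
      ∀ S : Submodule ℂ (Fin m → ℂ),
        S.map (A * W).mulVecLin = S → S.map (X * W).mulVecLin = S := by
  set B := A * W with hB
  set Y := X * W with hY
  have hBYB : B * Y * B = B := by
    have := congrArg (· * W) h1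
    simpa [hB, hY, Matrix.mul_assoc] using this
  constructor
  · -- forward direction
    intro hmain S hS
    have hpow : ∀ j, S.map ((B ^ j).mulVecLin) = S := by
      intro j
      induction j with
      | zero => simp
      | succ i ih =>
        rw [pow_succ', Matrix.mulVecLin_mul B (B ^ i), Submodule.map_comp, ih, hS]
    calc S.map Y.mulVecLin
        = (S.map ((B ^ (k + 1)).mulVecLin)).map Y.mulVecLin := by rw [hpow]
      _ = S.map ((Y * B ^ (k + 1)).mulVecLin) := by
          rw [Matrix.mulVecLin_mul Y (B ^ (k + 1)), Submodule.map_comp]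
      _ = S.map ((B ^ k).mulVecLin) := by rw [hmain]
      _ = S := hpow k
  · -- reverse direction
    intro h
    set S := LinearMap.range ((B ^ k).mulVecLin) with hSdef
    have hkB : matIndex B ≤ k := by
      rw [hk]; exact le_max_left _ _
    have hstab : LinearMap.range ((B ^ k).mulVecLin) =
        LinearMap.range ((B ^ matIndex B).mulVecLin) := range_stable B k hkB
    have hstab1 : LinearMap.range ((B ^ (k + 1)).mulVecLin) =
        LinearMap.range ((B ^ matIndex B).mulVecLin) :=
      range_stable B (k + 1) (le_trans hkB (Nat.le_succ _))
    have hSB : S.map B.mulVecLin = S := by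
      rw [hSdef, ← range_pow_succ, hstab1, ← hstab]
    have hSY : S.map Y.mulVecLin = S := h S hSB
    -- B is injective on S
    have hmem : ∀ x ∈ S, B.mulVecLin x ∈ S := by
      intro x hx
      rw [← hSB]
      exact Submodule.mem_map_of_mem hx
    set g : S →ₗ[ℂ] S := B.mulVecLin.restrict hmem with hg
    have hgsurj : Function.Surjective g := by
      rintro ⟨y, hy⟩
      rw [← hSB] at hy
      obtain ⟨x, hx, hxy⟩ := hy
      exact ⟨⟨x, hx⟩, Subtype.ext (by simpa [hg, LinearMap.restrict_apply] using hxy)⟩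
    have hginj : Function.Injective g := LinearMap.injective_iff_surjective.mpr hgsurj
    have hinj : ∀ u ∈ S, ∀ w ∈ S, B *ᵥ u = B *ᵥ w → u = w := by
      intro u hu w hw huw
      have : g ⟨u, hu⟩ = g ⟨w, hw⟩ := Subtype.ext (by
        simpa [hg, LinearMap.restrict_apply, Matrix.mulVecLin_apply] using huw)
      exact congrArg Subtype.val (hginj this)
    have hvec : ∀ v, (Y * B ^ (k + 1)) *ᵥ v = (B ^ k) *ᵥ v := by
      intro v
      have huS : (B ^ k) *ᵥ v ∈ S := ⟨v, by simp [Matrix.mulVecLin_apply]⟩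
      set u := (B ^ k) *ᵥ v with hu
      have hBuS : B *ᵥ u ∈ S := by
        simpa [Matrix.mulVecLin_apply] using hmem u huS
      have hYBuS : Y *ᵥ (B *ᵥ u) ∈ S := by
        rw [← hSY]
        exact ⟨B *ᵥ u, hBuS, by simp [Matrix.mulVecLin_apply]⟩
      have hcanc : B *ᵥ (Y *ᵥ (B *ᵥ u)) = B *ᵥ u := by
        have h' : (B * Y * B) *ᵥ u = B *ᵥ u := by rw [hBYB]
        simpa [← Matrix.mulVec_mulVec, Matrix.mul_assoc] using h'
      have hYBu : Y *ᵥ (B *ᵥ u) = u := hinj _ hYBuS _ huS hcanc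
      calc (Y * B ^ (k + 1)) *ᵥ v = Y *ᵥ ((B ^ (k + 1)) *ᵥ v) :=
            (Matrix.mulVec_mulVec v Y (B ^ (k + 1))).symm
        _ = Y *ᵥ (B *ᵥ u) := by
            rw [hu, pow_succ', ← Matrix.mulVec_mulVec v B (B ^ k)]
        _ = u := hYBu
    ext i j
    have := congrFun (hvec (Pi.single j 1)) i
    simpa using this
end
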